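/- For each k ≥ 1, the virtual knot L_{2k} given by the Gauss diagram consisting of one positive chord transversally intersected by 2k−1 parallel positive chords has odd writhe polynomial f_{L_{2k}}(t) = t^{2k} + 2k − 1, and consequently f_{L*_{2k}}(t) = t^{−2k+2} + (2k−1)t². -/

import Mathlib

open Finset LaurentPolynomial

/-- A signed, oriented chord diagram (combinatorial Gauss diagram) with `n` chords:
the `2*n` chord endpoints on the circle are the elements of `Fin (2*n)` in (positive)
cyclic order; chord `i` has over endpoint `c⁺ = ep (i, true)`, under endpoint
`c⁻ = ep (i, false)` and a sign (writhe) `sign i ∈ {1, -1}`. -/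
structure ChordDiagram (n : ℕ) where
  ep : Fin n × Bool ≃ Fin (2 * n)
  sign : Fin n → ℤ
  sign_unit : ∀ i, sign i = 1 ∨ sign i = -1

namespace ChordDiagram

variable {n : ℕ}

/-- the over endpoint `c⁺` of a chord -/
def over' (D : ChordDiagram n) (i : Fin n) : Fin (2 * n) := D.ep (i, true)

/-- the under endpoint `c⁻` of a chord -/
def under (D : ChordDiagram n) (i : Fin n) : Fin (2 * n) := D.ep (i, false)

/-- the number of steps from `b` to `x`, travelling in the positive direction
around the circle -/
def relpos (b x : Fin (2 * n)) : ℕ := (x.val + 2 * n - b.val) % (2 * n)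

/-- `x` lies strictly between the endpoints of chord `i`, on the side swept out
going from `c⁺` to `c⁻` in the positive direction -/
def StrictlyBetween (D : ChordDiagram n) (i : Fin n) (x : Fin (2 * n)) : Prop :=
  0 < relpos (D.over' i) x ∧ relpos (D.over' i) x < relpos (D.over' i) (D.under i)

instance (D : ChordDiagram n) (i : Fin n) (x : Fin (2 * n)) :
    Decidable (D.StrictlyBetween i x) := inferInstanceAs (Decidable (_ ∧ _))

/-- two distinct chords interlink if their endpoints alternate around the circle,
i.e. exactly one endpoint of `j` lies strictly between the endpoints of `i` -/
def Interlinks (D : ChordDiagram n) (i j : Fin n) : Prop :=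
  i ≠ j ∧ Xor (D.StrictlyBetween i (D.over' j)) (D.StrictlyBetween i (D.under j))

instance (D : ChordDiagram n) (i j : Fin n) : Decidable (D.Interlinks i j) :=
  inferInstanceAs (Decidable (_ ∧ _))

/-- the number of chords interlinking chord `i` -/
def interlinkCount (D : ChordDiagram n) (i : Fin n) : ℕ :=
  (univ.filter fun j => D.Interlinks i j).card

/-- the number of chord endpoints lying (strictly) on one side of chord `i` -/
def sideCount (D : ChordDiagram n) (i : Fin n) : ℕ :=
  (univ.filter fun x => D.StrictlyBetween i x).card

/-- a chord is odd if it interlinks an odd number of other chords -/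
def OddChord (D : ChordDiagram n) (i : Fin n) : Prop := Odd (D.interlinkCount i)

instance (D : ChordDiagram n) (i : Fin n) : Decidable (D.OddChord i) :=
  inferInstanceAs (Decidable (Odd _))

/-- The label `N(a)` of the arc whose terminal point is `a`: the sum of the signs of
all chords whose over endpoint is met strictly before their under endpoint when
traversing the circle once in the positive direction starting inside this arc. -/
def arcLabel (D : ChordDiagram n) (a : Fin (2 * n)) : ℤ :=
  ∑ i ∈ univ.filter fun i => relpos a (D.over' i) < relpos a (D.under i), D.sign i

/-- The value `N(c)` of a chord: for a positive chord, the difference `x - y` of the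
arc labels just before `c⁺` and just before `c⁻`; for a negative chord, the difference
`z - w` of the arc labels just after `c⁺` and just after `c⁻` (the label just after an
over endpoint is the label just before it minus the sign, and the label just after an
under endpoint is the label just before it plus the sign). -/
def chordVal (D : ChordDiagram n) (i : Fin n) : ℤ :=
  if D.sign i = 1 then D.arcLabel (D.over' i) - D.arcLabel (D.under i)
  else (D.arcLabel (D.over' i) - D.sign i) - (D.arcLabel (D.under i) + D.sign i)

/-- the odd writhe `J(K) = Σ_{c odd} w(c)` -/
def oddWrithe (D : ChordDiagram n) : ℤ :=
  ∑ i ∈ univ.filter fun i => D.OddChord i, D.sign i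

/-- the odd writhe polynomial `f_K(t) = Σ_{c odd} w(c) · t^{N(c)} ∈ ℤ[t,t⁻¹]` -/
noncomputable def owp (D : ChordDiagram n) : LaurentPolynomial ℤ :=
  ∑ i ∈ univ.filter fun i => D.OddChord i, C (D.sign i) * T (D.chordVal i)

/-- evaluation of the odd writhe polynomial at a rational number `x`:
`Σ_{c odd} w(c) · x^{N(c)}` -/
def owpEval (D : ChordDiagram n) (x : ℚ) : ℚ :=
  ∑ i ∈ univ.filter fun i => D.OddChord i, (D.sign i : ℚ) * x ^ D.chordVal i

/-- the coefficient of `t^k` in a Laurent polynomial -/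
def coeffOf (f : LaurentPolynomial ℤ) (k : ℤ) : ℤ := f.coeff k

/-- the degree `Deg f = max { |i| : coefficient of tⁱ in f is nonzero }` -/
def owpDeg (f : LaurentPolynomial ℤ) : ℕ := f.coeff.support.sup fun k => k.natAbs

/-- reversing the orientation of the knot: the cyclic order of the endpoints is
reversed, while signs and over/under data of the crossings are preserved -/
def reverse (D : ChordDiagram n) : ChordDiagram n where
  ep := D.ep.trans Fin.revPerm
  sign := D.sign
  sign_unit := D.sign_unit

/-- the mirror image: every crossing is switched, so every chord's over and under
endpoints are exchanged and its sign is negated -/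
def mirror (D : ChordDiagram n) : ChordDiagram n where
  ep := (Equiv.prodCongr (Equiv.refl (Fin n))
      ⟨fun b => !b, fun b => !b, Bool.not_not, Bool.not_not⟩).trans D.ep
  sign := fun i => -D.sign i
  sign_unit := fun i => (D.sign_unit i).elim
    (fun h => Or.inr (show -D.sign i = -1 by rw [h]))
    (fun h => Or.inl (show -D.sign i = 1 by rw [h]; ring))

/-! ### Planarity via the Euler characteristic of the carrier surface

The diagram determines a 4-valent graph (vertices = chords, edges = the `2*n` arcs of
the circle) together with a rotation system at each vertex, coming from the structure
of a transversal crossing: for a positive crossing the counterclockwise order of the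
four ends is (over-out, under-out, over-in, under-in), for a negative crossing it is
(over-out, under-in, over-in, under-out).  The diagram is realizable by a classical
(planar) knot diagram iff the resulting closed oriented carrier surface is a sphere,
i.e. iff `V - E + F = n - 2n + F = 2`.

Darts are encoded as pairs `(p, io) : Fin (2*n) × Bool`, meaning the end of an arc
at the vertex through the circle point `p`, with `io = true` for the outgoing arc
(from `p` to `p+1`) and `io = false` for the incoming arc (from `p-1` to `p`). -/

/-- the other endpoint of the chord through a given endpoint -/
def otherEnd (D : ChordDiagram n) (p : Fin (2 * n)) : Fin (2 * n) :=
  D.ep ((D.ep.symm p).1, !(D.ep.symm p).2)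

lemma otherEnd_otherEnd (D : ChordDiagram n) (p : Fin (2 * n)) :
    D.otherEnd (D.otherEnd p) = p := by
  simp [otherEnd]

/-- whether the rotation at the vertex toggles the in/out marker when passing from
the end at `p` to the end at the other endpoint of its chord -/
def tog (D : ChordDiagram n) (p : Fin (2 * n)) : Bool :=
  if D.sign (D.ep.symm p).1 = 1 then !(D.ep.symm p).2 else (D.ep.symm p).2

/-- the vertex rotation permutation on darts -/
def vertexPerm (D : ChordDiagram n) : Equiv.Perm (Fin (2 * n) × Bool) :=
  Equiv.trans
    ⟨fun x => (x.1, xor x.2 (D.tog x.1)), fun x => (x.1, xor x.2 (D.tog x.1)),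
      fun x => by simp [Bool.xor_assoc], fun x => by simp [Bool.xor_assoc]⟩
    ⟨fun x => (D.otherEnd x.1, x.2), fun x => (D.otherEnd x.1, x.2),
      fun x => by simp [otherEnd_otherEnd], fun x => by simp [otherEnd_otherEnd]⟩

/-- the edge involution on darts, matching the two ends of each arc -/
def arcPerm (D : ChordDiagram n) : Equiv.Perm (Fin (2 * n) × Bool) :=
  ⟨fun x => if x.2 then (finRotate (2 * n) x.1, false) else ((finRotate (2 * n)).symm x.1, true),
   fun x => if x.2 then (finRotate (2 * n) x.1, false) else ((finRotate (2 * n)).symm x.1, true),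
   fun x => by rcases x with ⟨p, _ | _⟩ <;> simp only [ite_true, ite_false, Bool.false_eq_true, Equiv.apply_symm_apply, Equiv.symm_apply_apply],
   fun x => by rcases x with ⟨p, _ | _⟩ <;> simp only [ite_true, ite_false, Bool.false_eq_true, Equiv.apply_symm_apply, Equiv.symm_apply_apply]⟩

/-- the face permutation on darts -/
def facePerm (D : ChordDiagram n) : Equiv.Perm (Fin (2 * n) × Bool) :=
  (D.arcPerm).trans D.vertexPerm

/-- the number of faces: the number of orbits of the face permutation -/
noncomputable def faceCount (D : ChordDiagram n) : ℕ :=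
  Nat.card (MulAction.orbitRel.Quotient (Subgroup.zpowers D.facePerm) (Fin (2 * n) × Bool))

/-- the chord diagram arises from a classical (planar) knot diagram: the carrier
surface has Euler characteristic `V - E + F = n - 2n + faceCount = 2` -/
def PlanarRealizable (D : ChordDiagram n) : Prop := D.faceCount = n + 2

end ChordDiagram


open ChordDiagram

/-- the Gauss diagram of the virtual knot `L_{2k}` of Figure 16: the vertical chord
`0` runs from point `0` (over) to point `2k` (under), and the `2k-1` parallel
horizontal chords `i` run from point `i` (over) to point `4k - i` (under). -/
def Lpos (k : ℕ) : Fin (2 * k) × Bool → Fin (2 * (2 * k)) := fun p =>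
  if p.2 then ⟨p.1.val, by have := p.1.isLt; omega⟩
  else if h : p.1.val = 0 then ⟨2 * k, by have := p.1.isLt; omega⟩
  else ⟨4 * k - p.1.val, by have := p.1.isLt; omega⟩


/-! In `L_{2k}` the vertical chord interlinks the `2k - 1` horizontal ones and each horizontal
chord interlinks only the vertical one, so every chord is odd. Writing the arc label as a sum
over chords of an indicator, the value of a positive chord is the number of chords met over-first
from its over endpoint minus the number met over-first from its under endpoint: `2k` for the
vertical chord and `0` for a horizontal one. Seen from a point `a`, a chord is met over-first in
exactly one of the two orientations unless `a` is one of its endpoints; summing over chords gives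
`N_{K*}(c) = 2 - N_K(c)` for every chord, hence `f_{K*}(t) = t² f_K(t⁻¹)`. -/

namespace ChordDiagram

variable {n : ℕ}

lemma relpos_eq (b x : Fin (2 * n)) :
    relpos b x = if b.val ≤ x.val then x.val - b.val else x.val + 2 * n - b.val := by
  have hb := b.isLt
  have hx := x.isLt
  unfold relpos
  split_ifs
  · rw [show x.val + 2 * n - b.val = (x.val - b.val) + 2 * n by omega, Nat.add_mod_right,
      Nat.mod_eq_of_lt (by omega)]
  · rw [Nat.mod_eq_of_lt (by omega)]

lemma relpos_rev_rev (b x : Fin (2 * n)) : relpos b.rev x.rev = relpos x b := by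
  have hb := b.isLt
  have hx := x.isLt
  simp only [relpos_eq, Fin.val_rev]
  split_ifs <;> omega

section

variable (D : ChordDiagram n)

lemma over'_ne_under (i j : Fin n) : D.over' i ≠ D.under j := fun h => by
  simpa using D.ep.injective h

lemma over'_inj {i j : Fin n} : D.over' i = D.over' j ↔ i = j := by
  simp [over']

lemma under_inj {i j : Fin n} : D.under i = D.under j ↔ i = j := by
  simp [under]

@[simp] lemma reverse_over' (i : Fin n) : D.reverse.over' i = (D.over' i).rev := rfl

@[simp] lemma reverse_under (i : Fin n) : D.reverse.under i = (D.under i).rev := rfl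

@[simp] lemma reverse_sign : D.reverse.sign = D.sign := rfl

lemma reverse_strictlyBetween_rev_iff (i : Fin n) {x : Fin (2 * n)}
    (hxo : x ≠ D.over' i) (hxu : x ≠ D.under i) :
    D.reverse.StrictlyBetween i x.rev ↔ ¬ D.StrictlyBetween i x := by
  have hou := D.over'_ne_under i i
  rw [Ne, Fin.ext_iff] at hxo hxu hou
  have := x.isLt
  have := (D.over' i).isLt
  have := (D.under i).isLt
  simp only [StrictlyBetween, reverse_over', reverse_under, relpos_rev_rev]
  simp only [relpos_eq]
  split_ifs <;> omega

lemma reverse_interlinks_iff (i j : Fin n) : D.reverse.Interlinks i j ↔ D.Interlinks i j := by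
  refine and_congr_right fun hij => ?_
  rw [reverse_over', reverse_under,
    D.reverse_strictlyBetween_rev_iff i (mt D.over'_inj.mp (Ne.symm hij)) (D.over'_ne_under j i),
    D.reverse_strictlyBetween_rev_iff i (D.over'_ne_under i j).symm
      (mt D.under_inj.mp (Ne.symm hij)), xor_not_not]

lemma reverse_oddChord_iff (i : Fin n) : D.reverse.OddChord i ↔ D.OddChord i := by
  simp only [OddChord, interlinkCount, reverse_interlinks_iff]

def overFirst (a : Fin (2 * n)) (j : Fin n) : ℤ :=
  if relpos a (D.over' j) < relpos a (D.under j) then 1 else 0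

lemma arcLabel_eq_sum (a : Fin (2 * n)) : D.arcLabel a = ∑ j, D.sign j * D.overFirst a j := by
  simp only [arcLabel, overFirst, mul_ite, mul_one, mul_zero, Finset.sum_ite, Finset.sum_const_zero,
    add_zero]

lemma overFirst_add_reverse_overFirst (a : Fin (2 * n)) (j : Fin n) :
    D.overFirst a j + D.reverse.overFirst a.rev j =
      1 + (if a = D.over' j then 1 else 0) - (if a = D.under j then 1 else 0) := by
  have hou := D.over'_ne_under j j
  rw [Ne, Fin.ext_iff] at hou
  have := a.isLt
  have := (D.over' j).isLt
  have := (D.under j).isLt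
  simp only [overFirst, reverse_over', reverse_under, relpos_rev_rev]
  simp only [relpos_eq, Fin.ext_iff]
  split_ifs <;> omega

lemma arcLabel_add_reverse_arcLabel (a : Fin (2 * n)) :
    D.arcLabel a + D.reverse.arcLabel a.rev = ∑ j, D.sign j *
      (1 + (if a = D.over' j then 1 else 0) - (if a = D.under j then 1 else 0)) := by
  simp only [arcLabel_eq_sum, reverse_sign, ← Finset.sum_add_distrib, ← mul_add,
    overFirst_add_reverse_overFirst]

lemma arcLabel_over'_add_reverse (i : Fin n) :
    D.arcLabel (D.over' i) + D.reverse.arcLabel (D.reverse.over' i) =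
      ∑ j, D.sign j + D.sign i := by
  rw [reverse_over', arcLabel_add_reverse_arcLabel]
  simp [D.over'_inj, D.over'_ne_under, mul_add, Finset.sum_add_distrib]

lemma arcLabel_under_add_reverse (i : Fin n) :
    D.arcLabel (D.under i) + D.reverse.arcLabel (D.reverse.under i) =
      ∑ j, D.sign j - D.sign i := by
  rw [reverse_under, arcLabel_add_reverse_arcLabel]
  simp [D.under_inj, (D.over'_ne_under _ _).symm, mul_sub, Finset.sum_sub_distrib]

lemma chordVal_add_reverse_chordVal (i : Fin n) : D.chordVal i + D.reverse.chordVal i = 2 := by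
  have ho := D.arcLabel_over'_add_reverse i
  have hu := D.arcLabel_under_add_reverse i
  simp only [reverse_over', reverse_under] at ho hu
  unfold chordVal
  rw [reverse_sign, reverse_over', reverse_under]
  rcases D.sign_unit i with h | h <;> simp only [h] <;> norm_num <;> linarith

lemma owp_reverse : D.reverse.owp = T 2 * invert D.owp := by
  simp only [owp, reverse_oddChord_iff, reverse_sign, map_sum, map_mul, invert_C, invert_T,
    Finset.mul_sum]
  refine Finset.sum_congr rfl fun i _ => ?_
  rw [show D.reverse.chordVal i = 2 + -D.chordVal i by
    linarith [D.chordVal_add_reverse_chordVal i], T_add]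
  ring

end

variable {D : ChordDiagram n}

lemma chordVal_eq_sum_of_sign_eq_one (hs : ∀ j, D.sign j = 1) (i : Fin n) :
    D.chordVal i = ∑ j, (D.overFirst (D.over' i) j - D.overFirst (D.under i) j) := by
  simp only [chordVal, hs, if_true, arcLabel_eq_sum, one_mul, Finset.sum_sub_distrib]

lemma oddChord_of_interlinks_iff (hn : Even n) (z : Fin n)
    (h : ∀ i j, D.Interlinks i j ↔ (i = z ↔ j ≠ z)) (i : Fin n) : D.OddChord i := by
  simp only [OddChord, interlinkCount, h]
  by_cases hi : i = z
  · obtain ⟨m, hm⟩ := hn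
    have := z.isLt
    simp only [hi, true_iff, Finset.filter_ne', Finset.card_erase_of_mem (Finset.mem_univ z),
      Finset.card_univ, Fintype.card_fin]
    exact ⟨m - 1, by omega⟩
  · simp [hi, Finset.filter_eq']

lemma owp_eq_of_chordVal_eq_of_ne (hs : ∀ i, D.sign i = 1) (ho : ∀ i, D.OddChord i) (z : Fin n)
    {v w : ℤ} (hz : D.chordVal z = v) (hw : ∀ i, i ≠ z → D.chordVal i = w) :
    D.owp = T v + C ((n : ℤ) - 1) * T w := by
  have hcard : (Finset.univ.erase z).card = n - 1 := by
    simp [Finset.card_erase_of_mem]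
  rw [owp, Finset.filter_true_of_mem fun i _ => ho i,
    ← Finset.add_sum_erase _ _ (Finset.mem_univ z),
    Finset.sum_congr rfl fun i hi => by rw [hw i (Finset.ne_of_mem_erase hi), hs i],
    Finset.sum_const, hcard, hz, hs z, map_one, one_mul, one_mul, nsmul_eq_mul,
    Nat.cast_pred (Fin.pos z), eq_intCast C]
  push_cast
  rfl

end ChordDiagram

section Lpos

variable {k : ℕ} {D : ChordDiagram (2 * k)}

lemma val_over'_of_lpos (hep : ∀ p, D.ep p = Lpos k p) (i : Fin (2 * k)) :
    (D.over' i).val = i.val := by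
  simp [over', hep, Lpos]

lemma val_under_of_lpos (hep : ∀ p, D.ep p = Lpos k p) (i : Fin (2 * k)) :
    (D.under i).val = if i.val = 0 then 2 * k else 4 * k - i.val := by
  by_cases h : i.val = 0 <;> simp [under, hep, Lpos, h]

lemma interlinks_iff_of_lpos (hep : ∀ p, D.ep p = Lpos k p) (i j : Fin (2 * k)) :
    D.Interlinks i j ↔ (i.val = 0 ↔ j.val ≠ 0) := by
  have := i.isLt
  have := j.isLt
  simp only [Interlinks, StrictlyBetween, Xor, relpos_eq, val_over'_of_lpos hep,
    val_under_of_lpos hep, Ne, Fin.ext_iff]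
  split_ifs <;> omega

lemma overFirst_sub_of_lpos (hep : ∀ p, D.ep p = Lpos k p) (i j : Fin (2 * k)) :
    D.overFirst (D.over' i) j - D.overFirst (D.under i) j =
      if i.val = 0 then 1 else (if j = i then 1 else 0) - (if j.val = 0 then 1 else 0) := by
  have := i.isLt
  have := j.isLt
  simp only [overFirst, relpos_eq, val_over'_of_lpos hep, val_under_of_lpos hep, Fin.ext_iff]
  split_ifs <;> omega

lemma chordVal_of_lpos (hep : ∀ p, D.ep p = Lpos k p) (hs : ∀ i, D.sign i = 1)
    (i : Fin (2 * k)) : D.chordVal i = if i.val = 0 then ((2 * k : ℕ) : ℤ) else 0 := by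
  simp only [chordVal_eq_sum_of_sign_eq_one hs, overFirst_sub_of_lpos hep]
  split_ifs with hi
  · simp
  · have hzero : ∀ j : Fin (2 * k), j.val = 0 ↔ j = ⟨0, by omega⟩ := fun j => by
      simp [Fin.ext_iff]
    simp [hzero, Finset.sum_sub_distrib]

end Lpos

/-- for `k ≥ 1`, the virtual knot `L_{2k}` (one positive chord
transversally intersected by `2k-1` parallel positive chords) has odd writhe
polynomial `t^{2k} + 2k - 1`, and its inverse has `t^{-2k+2} + (2k-1)t²`. -/
theorem stmt_15 (k : ℕ) (hk : 1 ≤ k) (D : ChordDiagram (2 * k))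
    (hep : ∀ p, D.ep p = Lpos k p) (hsign : ∀ i, D.sign i = 1) :
    D.owp = T ((2 * k : ℕ) : ℤ) + C ((2 * k : ℕ) - 1 : ℤ) ∧
    D.reverse.owp = T (-((2 * k : ℕ) : ℤ) + 2) + C ((2 * k : ℕ) - 1 : ℤ) * T 2 := by
  let z : Fin (2 * k) := ⟨0, by omega⟩
  have hz : ∀ i, i = z ↔ i.val = 0 := fun i => Fin.ext_iff
  have hodd : ∀ i, D.OddChord i := oddChord_of_interlinks_iff (even_two_mul k) z
    fun i j => by simp only [interlinks_iff_of_lpos hep, Ne, hz]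
  have howp : D.owp = T ((2 * k : ℕ) : ℤ) + C ((2 * k : ℕ) - 1 : ℤ) := by
    rw [owp_eq_of_chordVal_eq_of_ne hsign hodd z (by rw [chordVal_of_lpos hep hsign, if_pos rfl])
      fun i hi => by rw [chordVal_of_lpos hep hsign, if_neg (mt (hz i).mpr hi)], T_zero, mul_one]
  refine ⟨howp, ?_⟩
  rw [owp_reverse, howp, map_add, invert_T, invert_C, mul_add, ← T_add, add_comm 2]
  ring
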